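/- arXiv:2102.02901 — 5 statements merged into one kernel-verified Lean document; each statement's English description precedes it below -/
import Mathlib

section
/- If a sentence φ is provable from a set of sentences Γ in classical first-order logic, then for every complete Boolean algebra 𝔹 and every nonempty 𝔹-valued structure M, the infimum of the truth values of the sentences in Γ is less than or equal to the truth value of φ in M (Boolean-valued soundness theorem). -/
namespace Flypitch

universe u v

/-- A first-order language: relation and function symbols stratified by arity. -/
structure Language : Type (u + 1) where
  functions : ℕ → Type u
  relations : ℕ → Type u

/-- Partially applied terms; a `Preterm L n` becomes a term after `n` applications. -/
inductive Preterm (L : Language.{u}) : ℕ → Type u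
  | var : ℕ → Preterm L 0
  | func {l : ℕ} : L.functions l → Preterm L l
  | app {l : ℕ} : Preterm L (l + 1) → Preterm L 0 → Preterm L l

abbrev Term (L : Language.{u}) : Type u := Preterm L 0

/-- Partially applied formulas. -/
inductive Preformula (L : Language.{u}) : ℕ → Type u
  | falsum : Preformula L 0
  | equal : Term L → Term L → Preformula L 0
  | rel {l : ℕ} : L.relations l → Preformula L l
  | apprel {l : ℕ} : Preformula L (l + 1) → Term L → Preformula L l
  | imp : Preformula L 0 → Preformula L 0 → Preformula L 0
  | all : Preformula L 0 → Preformula L 0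

abbrev Formula (L : Language.{u}) : Type u := Preformula L 0

variable {L : Language.{u}}

/-- Lift the de Bruijn variables `≥ m` in a preterm by `n`. -/
def Preterm.lift : ∀ {l}, Preterm L l → ℕ → ℕ → Preterm L l
  | _, .var k, n, m => if m ≤ k then .var (k + n) else .var k
  | _, .func f, _, _ => .func f
  | _, .app t s, n, m => .app (t.lift n m) (s.lift n m)

/-- Substitute the term `s` for the variable `n` in a preterm. -/
def Preterm.subst : ∀ {l}, Preterm L l → Term L → ℕ → Preterm L l
  | _, .var k, s, n =>
      if k < n then .var k else if k = n then s.lift n 0 else .var (k - 1)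
  | _, .func f, _, _ => .func f
  | _, .app t₁ t₂, s, n => .app (t₁.subst s n) (t₂.subst s n)

/-- Lift the de Bruijn variables `≥ m` in a preformula by `n`. -/
def Preformula.lift : ∀ {l}, Preformula L l → ℕ → ℕ → Preformula L l
  | _, .falsum, _, _ => .falsum
  | _, .equal t₁ t₂, n, m => .equal (t₁.lift n m) (t₂.lift n m)
  | _, .rel R, _, _ => .rel R
  | _, .apprel f t, n, m => .apprel (f.lift n m) (t.lift n m)
  | _, .imp f g, n, m => .imp (f.lift n m) (g.lift n m)
  | _, .all f, n, m => .all (f.lift n (m + 1))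

/-- Substitute the term `s` for the variable `n` in a preformula. -/
def Preformula.subst : ∀ {l}, Preformula L l → Term L → ℕ → Preformula L l
  | _, .falsum, _, _ => .falsum
  | _, .equal t₁ t₂, s, n => .equal (t₁.subst s n) (t₂.subst s n)
  | _, .rel R, _, _ => .rel R
  | _, .apprel f t, s, n => .apprel (f.subst s n) (t.subst s n)
  | _, .imp f g, s, n => .imp (f.subst s n) (g.subst s n)
  | _, .all f, s, n => .all (f.subst s (n + 1))

/-- Negation. -/
def Preformula.not (f : Formula L) : Formula L := .imp f .falsum

/-- Natural deduction proof trees. -/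
inductive Prf : Set (Formula L) → Formula L → Type u
  | axm {Γ A} : A ∈ Γ → Prf Γ A
  | impI {Γ A B} : Prf (insert A Γ) B → Prf Γ (.imp A B)
  | impE {Γ} (A) {B} : Prf Γ (.imp A B) → Prf Γ A → Prf Γ B
  | falsumE {Γ A} : Prf (insert A.not Γ) .falsum → Prf Γ A
  | allI {Γ A} : Prf ((fun f => Preformula.lift f 1 0) '' Γ) A → Prf Γ (.all A)
  | allE {Γ A} (t) : Prf Γ (.all A) → Prf Γ (A.subst t 0)
  | ref (Γ t) : Prf Γ (.equal t t)
  | subst {Γ} (s t : Term L) (f : Formula L) : Prf Γ (.equal s t) →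
      Prf Γ (Preformula.subst f s 0) → Prf Γ (Preformula.subst f t 0)

/-- Provability: a proof tree exists. -/
def Provable (Γ : Set (Formula L)) (f : Formula L) : Prop := Nonempty (Prf Γ f)

/-- A `𝔹`-valued structure for `L`: function symbols are interpreted as operations,
relation symbols as `𝔹`-valued predicates, together with a `𝔹`-valued congruence
relation interpreting equality. -/
structure bStructure (L : Language.{u}) (𝔹 : Type v) [CompleteBooleanAlgebra 𝔹] :
    Type (max (u + 1) v) where
  carrier : Type u
  fun_map : ∀ {n}, L.functions n → (Fin n → carrier) → carrier
  rel_map : ∀ {n}, L.relations n → (Fin n → carrier) → 𝔹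
  eq : carrier → carrier → 𝔹
  eq_refl : ∀ x, eq x x = ⊤
  eq_symm : ∀ x y, eq x y = eq y x
  eq_trans : ∀ x y z, eq x y ⊓ eq y z ≤ eq x z
  fun_congr : ∀ {n} (f : L.functions n) (x y : Fin n → carrier),
    (⨅ i, eq (x i) (y i)) ≤ eq (fun_map f x) (fun_map f y)
  rel_congr : ∀ {n} (r : L.relations n) (x y : Fin n → carrier),
    (⨅ i, eq (x i) (y i)) ⊓ rel_map r x ≤ rel_map r y

variable {𝔹 : Type v} [CompleteBooleanAlgebra 𝔹]

/-- Realization of a preterm, given a valuation of the free variables. -/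
def Preterm.realize (S : bStructure L 𝔹) (v : ℕ → S.carrier) :
    ∀ {l}, Preterm L l → (Fin l → S.carrier) → S.carrier
  | _, .var k, _ => v k
  | _, .func f, xs => S.fun_map f xs
  | _, .app t s, xs =>
      Preterm.realize S v t
        (Fin.cons (α := fun _ => S.carrier) (Preterm.realize S v s (fun i => i.elim0)) xs)

/-- Boolean-valued realization of a preformula, given a valuation of the free
variables. -/
def Preformula.realize (S : bStructure L 𝔹) :
    ∀ {l}, (ℕ → S.carrier) → Preformula L l → (Fin l → S.carrier) → 𝔹
  | _, v, .falsum, _ => ⊥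
  | _, v, .equal t₁ t₂, _ =>
      S.eq (t₁.realize S v (fun i => i.elim0)) (t₂.realize S v (fun i => i.elim0))
  | _, v, .rel R, xs => S.rel_map R xs
  | _, v, .apprel f t, xs =>
      f.realize S v
        (Fin.cons (α := fun _ => S.carrier) (t.realize S v (fun i => i.elim0)) xs)
  | _, v, .imp f g, xs => f.realize S v xs ⇨ g.realize S v xs
  | _, v, .all f, _ =>
      ⨅ x : S.carrier, f.realize S (fun n => Nat.casesOn n x v) (fun i => i.elim0)

/-- `f` is a sentence: it has no free variables (lifting acts trivially). -/
def IsSentence (f : Formula L) : Prop := Preformula.lift f 1 0 = f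

section Soundness

variable (S : bStructure L 𝔹)

theorem realize_lift_term (v : ℕ → S.carrier) (n m : ℕ) :
    ∀ {l} (t : Preterm L l) (xs : Fin l → S.carrier),
      (t.lift n m).realize S v xs
        = t.realize S (fun k => v (if k < m then k else k + n)) xs
  | _, .var k, xs => by
      by_cases h : m ≤ k
      · simp [Preterm.lift, Preterm.realize, if_pos h, if_neg (Nat.not_lt.mpr h)]
      · simp [Preterm.lift, Preterm.realize, if_neg h, if_pos (Nat.not_le.mp h)]
  | _, .func f, xs => rfl
  | _, .app t s, xs => by
      simp only [Preterm.lift, Preterm.realize,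
        realize_lift_term v n m t, realize_lift_term v n m s]

theorem realize_lift_formula (n m : ℕ) :
    ∀ {l} (f : Preformula L l) (v : ℕ → S.carrier) (xs : Fin l → S.carrier),
      (f.lift n m).realize S v xs
        = f.realize S (fun k => v (if k < m then k else k + n)) xs
  | _, .falsum, v, xs => rfl
  | _, .equal t₁ t₂, v, xs => by
      simp only [Preformula.lift, Preformula.realize, realize_lift_term]
  | _, .rel R, v, xs => rfl
  | _, .apprel f t, v, xs => by
      simp only [Preformula.lift, Preformula.realize, realize_lift_term,
        realize_lift_formula n m f]
  | _, .imp f g, v, xs => by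
      simp only [Preformula.lift, Preformula.realize, realize_lift_formula n m f,
        realize_lift_formula n m g]
  | _, .all f, v, xs => by
      simp only [Preformula.lift, Preformula.realize]
      refine iInf_congr fun x => ?_
      rw [realize_lift_formula n (m + 1) f]
      congr 1
      funext k
      cases k with
      | zero => simp
      | succ k =>
          by_cases h : k < m
          · simp [h, Nat.succ_lt_succ h]
          · have h2 : ¬ (k + 1 < m + 1) := by omega
            have h3 : k + 1 + n = (k + n) + 1 := by omega
            simp [h, h2, h3]

/-- Insert the value `a` at position `n` in a valuation. -/
def substv (v : ℕ → S.carrier) (a : S.carrier) (n : ℕ) : ℕ → S.carrier :=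
  fun k => if k < n then v k else if k = n then a else v (k - 1)

theorem realize_subst_term (v : ℕ → S.carrier) (s : Term L) (n : ℕ) :
    ∀ {l} (t : Preterm L l) (xs : Fin l → S.carrier),
      (t.subst s n).realize S v xs
        = t.realize S
            (substv S v (s.realize S (fun j => v (j + n)) (fun i => i.elim0)) n) xs
  | _, .var k, xs => by
      simp only [Preterm.subst]
      rcases lt_trichotomy k n with h | h | h
      · rw [if_pos h]; simp [Preterm.realize, substv, h]
      · subst h
        rw [if_neg (lt_irrefl k), if_pos rfl, realize_lift_term]
        have hx : xs = (fun i => i.elim0) := by funext i; exact i.elim0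
        simp only [Preterm.realize, substv, lt_irrefl, if_neg (lt_irrefl k), if_pos rfl, hx]
        simp
      · have h1 : ¬ k < n := by omega
        have h2 : ¬ k = n := by omega
        rw [if_neg h1, if_neg h2]
        simp [Preterm.realize, substv, h1, h2]
  | _, .func f, xs => rfl
  | _, .app t u, xs => by
      simp only [Preterm.subst, Preterm.realize,
        realize_subst_term v s n t, realize_subst_term v s n u]

theorem realize_subst_formula (s : Term L) :
    ∀ {l} (f : Preformula L l) (n : ℕ) (v : ℕ → S.carrier) (xs : Fin l → S.carrier),
      (f.subst s n).realize S v xs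
        = f.realize S
            (substv S v (s.realize S (fun j => v (j + n)) (fun i => i.elim0)) n) xs
  | _, .falsum, n, v, xs => rfl
  | _, .equal t₁ t₂, n, v, xs => by
      simp only [Preformula.subst, Preformula.realize, realize_subst_term]
  | _, .rel R, n, v, xs => rfl
  | _, .apprel f t, n, v, xs => by
      simp only [Preformula.subst, Preformula.realize, realize_subst_term,
        realize_subst_formula s f n]
  | _, .imp f g, n, v, xs => by
      simp only [Preformula.subst, Preformula.realize, realize_subst_formula s f n,
        realize_subst_formula s g n]
  | _, .all f, n, v, xs => by
      simp only [Preformula.subst, Preformula.realize]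
      refine iInf_congr fun x => ?_
      rw [realize_subst_formula s f (n + 1)]
      have hv : (fun j => (fun n' => Nat.casesOn n' x v : ℕ → S.carrier) (j + (n + 1)))
          = fun j => v (j + n) := by
        funext j
        have : j + (n + 1) = (j + n) + 1 := by omega
        rw [this]
      rw [hv]
      congr 1
      funext k
      cases k with
      | zero => simp [substv]
      | succ k =>
          by_cases h1 : k < n
          · have : k + 1 < n + 1 := by omega
            simp [substv, h1, this]
          · by_cases h2 : k = n
            · subst h2
              simp [substv]
            · have ha : ¬ k + 1 < n + 1 := by omega
              have hb : ¬ k + 1 = n + 1 := by omega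
              have hk : k ≠ 0 ∨ True := Or.inr trivial
              have hpos : 1 ≤ k := by omega
              have hc : k + 1 - 1 = (k - 1) + 1 := by omega
              simp [substv, h1, h2, ha, hb, hc]

theorem realize_term_congr :
    ∀ {l} (t : Preterm L l) (v w : ℕ → S.carrier) (xs ys : Fin l → S.carrier),
      (⨅ k, S.eq (v k) (w k)) ⊓ (⨅ i, S.eq (xs i) (ys i))
        ≤ S.eq (t.realize S v xs) (t.realize S w ys)
  | _, .var k, v, w, xs, ys =>
      inf_le_left.trans (iInf_le _ k)
  | _, .func f, v, w, xs, ys =>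
      inf_le_right.trans (S.fun_congr f xs ys)
  | _, .app t u, v, w, xs, ys => by
      simp only [Preterm.realize]
      have hu := realize_term_congr u v w (fun i => i.elim0) (fun i => i.elim0)
      have hu' : (⨅ k, S.eq (v k) (w k))
          ≤ S.eq (u.realize S v fun i => i.elim0) (u.realize S w fun i => i.elim0) := by
        refine le_trans ?_ hu
        exact le_inf le_rfl (le_iInf fun i => i.elim0)
      have ht := realize_term_congr t v w
        (Fin.cons (α := fun _ => S.carrier) (u.realize S v fun i => i.elim0) xs)
        (Fin.cons (α := fun _ => S.carrier) (u.realize S w fun i => i.elim0) ys)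
      refine le_trans ?_ ht
      refine le_inf inf_le_left (le_iInf fun i => ?_)
      refine Fin.cases ?_ (fun j => ?_) i
      · simpa using hu'.trans' inf_le_left
      · simpa using inf_le_right.trans (iInf_le _ j)

theorem realize_formula_congr :
    ∀ {l} (f : Preformula L l) (v w : ℕ → S.carrier) (xs ys : Fin l → S.carrier),
      (⨅ k, S.eq (v k) (w k)) ⊓ (⨅ i, S.eq (xs i) (ys i)) ⊓ f.realize S v xs
        ≤ f.realize S w ys
  | _, .falsum, v, w, xs, ys => by simp [Preformula.realize]
  | _, .equal t₁ t₂, v, w, xs, ys => by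
      simp only [Preformula.realize]
      have h1 := realize_term_congr S t₁ v w (fun i => i.elim0) (fun i => i.elim0)
      have h2 := realize_term_congr S t₂ v w (fun i => i.elim0) (fun i => i.elim0)
      set E := (⨅ k, S.eq (v k) (w k)) with hE
      have hE1 : E ≤ S.eq (t₁.realize S v fun i => i.elim0) (t₁.realize S w fun i => i.elim0) :=
        (le_inf le_rfl (le_iInf fun i => i.elim0)).trans h1
      have hE2 : E ≤ S.eq (t₂.realize S v fun i => i.elim0) (t₂.realize S w fun i => i.elim0) :=
        (le_inf le_rfl (le_iInf fun i => i.elim0)).trans h2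
      set a := t₁.realize S v fun i => i.elim0
      set a' := t₁.realize S w fun i => i.elim0
      set b := t₂.realize S v fun i => i.elim0
      set b' := t₂.realize S w fun i => i.elim0
      calc E ⊓ (⨅ i : Fin 0, S.eq _ _) ⊓ S.eq a b
          ≤ (S.eq a' a ⊓ S.eq a b) ⊓ S.eq b b' := by
            refine le_inf (le_inf ?_ inf_le_right) ?_
            · exact inf_le_left.trans (inf_le_left.trans (hE1.trans (by rw [S.eq_symm])))
            · exact inf_le_left.trans (inf_le_left.trans hE2)
        _ ≤ S.eq a' b ⊓ S.eq b b' := inf_le_inf_right _ (S.eq_trans _ _ _)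
        _ ≤ S.eq a' b' := S.eq_trans _ _ _
  | _, .rel R, v, w, xs, ys => by
      simpa only [Preformula.realize] using
        (inf_le_inf_right _ inf_le_right).trans (S.rel_congr R xs ys)
  | _, .apprel f t, v, w, xs, ys => by
      simp only [Preformula.realize]
      have ht := realize_term_congr S t v w (fun i => i.elim0) (fun i => i.elim0)
      have ht' : (⨅ k, S.eq (v k) (w k))
          ≤ S.eq (t.realize S v fun i => i.elim0) (t.realize S w fun i => i.elim0) :=
        (le_inf le_rfl (le_iInf fun i => i.elim0)).trans ht
      have hf := realize_formula_congr f v w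
        (Fin.cons (α := fun _ => S.carrier) (t.realize S v fun i => i.elim0) xs)
        (Fin.cons (α := fun _ => S.carrier) (t.realize S w fun i => i.elim0) ys)
      refine le_trans ?_ hf
      refine inf_le_inf_right _ (le_inf inf_le_left (le_iInf fun i => ?_))
      refine Fin.cases ?_ (fun j => ?_) i
      · simpa using ht'.trans' inf_le_left
      · simpa using inf_le_right.trans (iInf_le _ j)
  | _, .imp f g, v, w, xs, ys => by
      simp only [Preformula.realize]
      rw [le_himp_iff]
      set E := (⨅ k, S.eq (v k) (w k)) with hE
      set Q := (⨅ i, S.eq (xs i) (ys i)) with hQ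
      have hsymm : E ⊓ Q ≤ (⨅ k, S.eq (w k) (v k)) ⊓ (⨅ i, S.eq (ys i) (xs i)) := by
        refine le_inf (inf_le_left.trans ?_) (inf_le_right.trans ?_)
        · exact le_iInf fun k => (iInf_le _ k).trans (by rw [S.eq_symm])
        · exact le_iInf fun i => (iInf_le _ i).trans (by rw [S.eq_symm])
      have hf : E ⊓ Q ⊓ f.realize S w ys ≤ f.realize S v xs :=
        (inf_le_inf_right _ hsymm).trans (realize_formula_congr f w v ys xs)
      have hg := realize_formula_congr g v w xs ys
      calc E ⊓ Q ⊓ (f.realize S v xs ⇨ g.realize S v xs) ⊓ f.realize S w ys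
          ≤ (f.realize S v xs ⇨ g.realize S v xs) ⊓ (E ⊓ Q ⊓ f.realize S v xs) := by
            refine le_inf (inf_le_left.trans inf_le_right) ?_
            refine le_inf (le_inf ?_ ?_) ?_
            · exact inf_le_left.trans (inf_le_left.trans inf_le_left)
            · exact inf_le_left.trans (inf_le_left.trans inf_le_right)
            · refine le_trans ?_ hf
              exact le_inf (inf_le_left.trans inf_le_left) inf_le_right
        _ ≤ (f.realize S v xs ⇨ g.realize S v xs) ⊓ f.realize S v xs
              ⊓ (E ⊓ Q) := by
            refine le_inf (le_inf inf_le_left ?_) ?_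
            · exact inf_le_right.trans inf_le_right
            · exact inf_le_right.trans inf_le_left
        _ ≤ E ⊓ Q ⊓ g.realize S v xs := by
            rw [inf_comm]
            exact inf_le_inf_left _ himp_inf_le
        _ ≤ g.realize S w ys := hg
  | _, .all f, v, w, xs, ys => by
      simp only [Preformula.realize]
      refine le_iInf fun x => ?_
      refine le_trans ?_
        (realize_formula_congr f (fun n => Nat.casesOn n x v) (fun n => Nat.casesOn n x w)
          (fun i => i.elim0) (fun i => i.elim0))
      refine le_inf (le_inf ?_ (le_iInf fun i => i.elim0)) (inf_le_right.trans (iInf_le _ x))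
      refine le_iInf fun k => ?_
      cases k with
      | zero => simpa using le_top.trans (by rw [S.eq_refl])
      | succ k => exact inf_le_left.trans (inf_le_left.trans (iInf_le _ k))

theorem prf_sound : ∀ {Γ : Set (Formula L)} {φ : Formula L}, Prf Γ φ →
    ∀ v : ℕ → S.carrier,
      (⨅ ψ ∈ Γ, Preformula.realize S v ψ (fun i => i.elim0)) ≤
        Preformula.realize S v φ (fun i => i.elim0) := by
  intro Γ φ d
  induction d with
  | @axm Γ A h => exact fun v => iInf₂_le _ h
  | @impI Γ A B d ih =>
      intro v
      simp only [Preformula.realize, le_himp_iff]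
      have := ih v
      rw [iInf_insert] at this
      exact (le_of_eq (inf_comm _ _)).trans this
  | @impE Γ A B d₁ d₂ ih₁ ih₂ =>
      intro v
      have h := le_inf (ih₁ v) (ih₂ v)
      refine h.trans ?_
      simpa only [Preformula.realize] using himp_inf_le
  | @falsumE Γ A d ih =>
      intro v
      have h := ih v
      rw [iInf_insert] at h
      simp only [Preformula.not, Preformula.realize, himp_bot, le_bot_iff] at h
      have hd : Disjoint (⨅ ψ ∈ Γ, Preformula.realize S v ψ fun i => i.elim0)
          ((Preformula.realize S v A fun i => i.elim0)ᶜ) := by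
        rw [disjoint_iff, inf_comm]; exact h
      have := le_compl_iff_disjoint_right.mpr hd
      rwa [compl_compl] at this
  | @allI Γ A d ih =>
      intro v
      simp only [Preformula.realize]
      refine le_iInf fun x => ?_
      have h := ih (fun n => Nat.casesOn n x v)
      rw [iInf_image] at h
      refine le_trans ?_ h
      refine le_iInf₂ fun ψ hψ => ?_
      rw [realize_lift_formula]
      have hv : (fun k => (fun n => Nat.casesOn n x v : ℕ → S.carrier)
          (if k < 0 then k else k + 1)) = v := by
        funext k; simp
      rw [hv]
      exact iInf₂_le _ hψ
  | @allE Γ A t d ih =>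
      intro v
      refine (ih v).trans ?_
      simp only [Preformula.realize]
      rw [realize_subst_formula]
      refine iInf_le_of_le
        (t.realize S (fun j => v (j + 0)) (fun i => i.elim0)) (le_of_eq ?_)
      congr 1
      funext k
      cases k with
      | zero => simp [substv]
      | succ k =>
          have h1 : ¬ k + 1 < 0 := by omega
          have h2 : k + 1 ≠ 0 := by omega
          simp [substv, h1, h2]
  | ref Γ t =>
      intro v
      simp only [Preformula.realize, S.eq_refl]
      exact le_top
  | @subst Γ s t f d₁ d₂ ih₁ ih₂ =>
      intro v
      have h1 := ih₁ v
      have h2 := ih₂ v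
      simp only [Preformula.realize] at h1
      rw [realize_subst_formula] at h2 ⊢
      set a := s.realize S (fun j => v (j + 0)) (fun i => i.elim0) with ha
      set b := t.realize S (fun j => v (j + 0)) (fun i => i.elim0) with hb
      have hab : (⨅ ψ ∈ Γ, Preformula.realize S v ψ fun i => i.elim0) ≤ S.eq a b := by
        refine h1.trans (le_of_eq ?_)
        rw [ha, hb]
        congr 1 <;> · congr 1; funext j; simp
      have hcong := realize_formula_congr S f (substv S v a 0) (substv S v b 0)
        (fun i => i.elim0) (fun i => i.elim0)
      refine le_trans ?_ hcong
      refine le_inf (le_inf ?_ (le_iInf fun i => i.elim0)) h2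
      refine le_iInf fun k => ?_
      cases k with
      | zero => simpa [substv] using hab
      | succ k =>
          have h1' : ¬ k + 1 < 0 := by omega
          have h2' : k + 1 ≠ 0 := by omega
          simp only [substv, if_neg h1', if_neg h2']
          simp [S.eq_refl]

end Soundness

/-- The Boolean-valued soundness theorem: if the sentence `φ` is provable from a set
of sentences `Γ`, then in every nonempty `𝔹`-valued structure the infimum of the
truth values of the members of `Γ` is below the truth value of `φ`. -/
theorem boolean_soundness {L : Language.{u}} {Γ : Set (Formula L)} {φ : Formula L}
    (hΓ : ∀ ψ ∈ Γ, IsSentence ψ) (hφ : IsSentence φ) (H : Provable Γ φ)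
    (𝔹 : Type v) [CompleteBooleanAlgebra 𝔹] (S : bStructure L 𝔹)
    (hS : Nonempty S.carrier) (v : ℕ → S.carrier) :
    (⨅ ψ ∈ Γ, Preformula.realize S v ψ (fun i => i.elim0)) ≤
      Preformula.realize S v φ (fun i => i.elim0) := by
  obtain ⟨d⟩ := H
  exact prf_sound S d v

end Flypitch
end

section
/- Let κ be an infinite cardinal and θ > κ a regular cardinal such that for all α < θ, sup over ρ < κ of α^ρ is less than θ. Then any indexed family {A_i}_{i ∈ I} of sets with |I| ≥ θ and |A_i| < κ for all i contains a subfamily of size θ forming a Δ-system (i.e., there is a root r such that A_i ∩ A_j = r for all distinct indices i, j in the subfamily). -/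
universe u

open Cardinal Set

/-!
Shrink the index set to size `θ` and embed `⋃ i, A i` into `θ.ord.ToType`, a linear order in
which every set of size `< θ` is bounded and every initial segment has size `< θ`.

First find `γ` such that for every `b`, `θ` many `A i` miss `[γ, b)`. Otherwise pick for each `γ`
a `g γ` for which fewer than `θ` sets miss `[γ, g γ)`; a maximal pairwise disjoint family of
these intervals has size `θ` (a smaller one is bounded, so could be extended), and as `θ` is regular
and `κ < θ`, some `A i` meets `κ` of them, contradicting `#(A i) < κ`. By the same maximality
argument there are `θ` indices whose tails `A i \ Iio γ` are pairwise disjoint. Finally the heads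
`A i ∩ Iio γ` range over at most `κ * max #(Iio γ) ℵ₀ ^< κ < θ` sets, so by regularity `θ` of these
indices share a head `r`, which is then the root of a Δ-system.
-/

def IsDeltaSystem {ι α : Type*} (A : ι → Set α) (t : Set ι) (r : Set α) : Prop :=
  ∀ i ∈ t, ∀ j ∈ t, i ≠ j → A i ∩ A j = r

namespace IsDeltaSystem

variable {ι ι' α β : Type*} {A : ι → Set α} {t : Set ι} {r : Set α}

theorem mono {s : Set ι} (h : IsDeltaSystem A t r) (hs : s ⊆ t) :
    IsDeltaSystem A s r :=
  fun i hi j hj => h i (hs hi) j (hs hj)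

theorem image {f : α → β} (hf : Function.Injective f) (h : IsDeltaSystem A t r) :
    IsDeltaSystem (fun i => f '' A i) t (f '' r) := fun i hi j hj hij => by
  rw [← image_inter hf, h i hi j hj hij]

theorem of_image {f : α → β} (hf : Function.Injective f) {s : Set β}
    (h : IsDeltaSystem (fun i => f '' A i) t s) : IsDeltaSystem A t (f ⁻¹' s) :=
  fun i hi j hj hij => by rw [← h i hi j hj hij, ← image_inter hf, preimage_image_eq _ hf]

theorem of_comp {g : ι' → ι} {s : Set ι'}
    (h : IsDeltaSystem (A ∘ g) s r) : IsDeltaSystem A (g '' s) r := by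
  rintro _ ⟨i, hi, rfl⟩ _ ⟨j, hj, rfl⟩ hij
  exact h i hi j hj (ne_of_apply_ne g hij)

end IsDeltaSystem

theorem Set.inter_eq_of_inter_eq_of_disjoint_diff {α : Type*} {a b r L : Set α}
    (ha : a ∩ L = r) (hb : b ∩ L = r) (hd : Disjoint (a \ L) (b \ L)) : a ∩ b = r := by
  subst ha
  refine subset_antisymm (fun x ⟨hxa, hxb⟩ => ⟨hxa, ?_⟩) fun x hx => ⟨hx.1, (hb ▸ hx).1⟩
  by_contra hx
  exact disjoint_left.1 hd ⟨hxa, hx⟩ ⟨hxb, hx⟩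

theorem Set.PairwiseDisjoint.mk_le_of_inter_nonempty {α J : Type u} {S : Set J} {X : J → Set α}
    (hS : S.PairwiseDisjoint X) {B : Set α} (h : ∀ j ∈ S, (B ∩ X j).Nonempty) : #S ≤ #B := by
  choose f hf using fun j : S => h j j.2
  refine mk_le_of_injective (f := fun j => (⟨f j, (hf j).1⟩ : B)) fun j k hjk => ?_
  have hfjk : f j = f k := congrArg Subtype.val hjk
  exact Subtype.ext (hS.elim_set j.2 k.2 _ (hf j).2 (hfjk ▸ (hf k).2))

theorem Cardinal.exists_mk_Iio_toType_eq {κ μ : Cardinal.{u}} (h : μ < κ) :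
    ∃ ρ : κ.ord.ToType, #(Iio ρ) = μ := by
  obtain ⟨ρ, hρ⟩ := Ordinal.typein_surj (α := κ.ord.ToType) (· < ·)
    (by rw [Ordinal.type_toType]; exact ord_lt_ord.2 h)
  refine ⟨ρ, ?_⟩
  rw [← Ordinal.card_type (α := Iio ρ) (· < ·), Ordinal.type_Iio_lt, hρ, card_ord]

theorem Cardinal.mk_bounded_subset_lt_le {α : Type u} (s : Set α) (κ : Cardinal.{u}) :
    #{t : Set α // t ⊆ s ∧ #t < κ} ≤ κ * max #s ℵ₀ ^< κ := by
  have hcover : {t : Set α | t ⊆ s ∧ #t < κ} ⊆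
      ⋃ ρ : κ.ord.ToType, {t | t ⊆ s ∧ #t ≤ #(Iio ρ)} := by
    rintro t ⟨hts, htκ⟩
    obtain ⟨ρ, hρ⟩ := exists_mk_Iio_toType_eq htκ
    exact mem_iUnion.2 ⟨ρ, hts, hρ.ge⟩
  calc #{t : Set α // t ⊆ s ∧ #t < κ}
      ≤ #(⋃ ρ : κ.ord.ToType, {t : Set α | t ⊆ s ∧ #t ≤ #(Iio ρ)}) := mk_le_mk_of_subset hcover
    _ ≤ #κ.ord.ToType * ⨆ ρ : κ.ord.ToType, #{t : Set α | t ⊆ s ∧ #t ≤ #(Iio ρ)} :=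
      mk_iUnion_le _
    _ ≤ κ * max #s ℵ₀ ^< κ := by
      rw [mk_toType, card_ord]
      refine mul_le_mul' le_rfl (ciSup_le' fun ρ => ?_)
      exact (mk_bounded_subset_le s _).trans (le_powerlt _ (by simpa using mk_Iio_lt ρ))

section LinearOrder

variable {O : Type u} [LinearOrder O] {θ : Cardinal.{u}}

theorem exists_forall_lt_of_mk_lt_cof {s : Set O} (hs : #s < Order.cof O) :
    ∃ b, ∀ x ∈ s, x < b := by
  by_contra! h
  exact hs.not_ge (Order.cof_le h)

theorem le_mk_Ici_of_le_cof (hθ : ℵ₀ ≤ θ) (hcof : θ ≤ Order.cof O) (hIio : ∀ b : O, #(Iio b) < θ)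
    (b : O) : θ ≤ #(Ici b) := by
  by_contra! h
  have : #O < θ := by
    rw [← mk_univ, ← Iio_union_Ici (a := b)]
    exact (mk_union_le _ _).trans_lt (add_lt_of_lt hθ (hIio b) h)
  exact this.not_ge (hcof.trans (Order.cof_le_cardinalMk O))

theorem exists_pairwiseDisjoint_of_forall_le_mk {J : Type u} (hθ : θ.IsRegular)
    (hcof : θ ≤ Order.cof O) {X : J → Set O} (hX : ∀ j, #(X j) < θ)
    (hfar : ∀ b, θ ≤ #{j | ∀ x ∈ X j, b ≤ x}) : ∃ S : Set J, θ ≤ #S ∧ S.PairwiseDisjoint X := by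
  obtain ⟨S, hS⟩ := zorn_subset {S : Set J | S.PairwiseDisjoint X} fun c hc hchain =>
    ⟨⋃₀ c, (pairwiseDisjoint_sUnion hchain.directedOn).2 hc, fun _ => subset_sUnion_of_mem⟩
  refine ⟨S, not_lt.1 fun hSθ => ?_, hS.prop⟩
  obtain ⟨b, hb⟩ := exists_forall_lt_of_mk_lt_cof (s := ⋃ j ∈ S, X j)
    (((card_biUnion_lt_iff_forall_of_isRegular hθ hSθ).2 fun j _ => hX j).trans_le hcof)
  obtain ⟨j, hjfar, hjS⟩ : ∃ j ∈ {j | ∀ x ∈ X j, b ≤ x}, j ∉ S :=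
    not_subset.1 fun hsub => (hfar b).not_gt ((mk_le_mk_of_subset hsub).trans_lt hSθ)
  refine hjS (hS.mem_of_prop_insert (hS.prop.insert fun k hk _ => ?_))
  exact disjoint_left.2 fun x hxj hxk => (hjfar x hxj).not_gt (hb x (mem_biUnion hk hxk))

theorem exists_forall_le_mk_disjoint_Ico {κ : Cardinal.{u}} {ι : Type u} (hθ : θ.IsRegular)
    (hcof : θ ≤ Order.cof O) (hIio : ∀ b : O, #(Iio b) < θ) (hκθ : κ < θ) {B : ι → Set O}
    (hι : θ ≤ #ι) (hB : ∀ i, #(B i) < κ) : ∃ γ, ∀ b, θ ≤ #{i | Disjoint (B i) (Ico γ b)} := by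
  by_contra! h
  choose g hg using h
  obtain ⟨S, hSθ, hS⟩ := exists_pairwiseDisjoint_of_forall_le_mk hθ hcof
    (X := fun γ => Ico γ (g γ))
    (fun γ => (mk_le_mk_of_subset Ico_subset_Iio_self).trans_lt (hIio _))
    fun b => (le_mk_Ici_of_le_cof hθ.aleph0_le hcof hIio b).trans
      (mk_le_mk_of_subset fun γ hγ x hx => le_trans hγ hx.1)
  obtain ⟨S', hS'S, hS'κ⟩ := le_mk_iff_exists_subset.1 (hκθ.le.trans hSθ)
  have hsmall : #(⋃ γ ∈ S', {i | Disjoint (B i) (Ico γ (g γ))}) < θ :=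
    (card_biUnion_lt_iff_forall_of_isRegular hθ (hS'κ ▸ hκθ)).2 fun γ _ => hg γ
  obtain ⟨i, -, hi⟩ := not_subset.1 fun h =>
    ((mk_le_mk_of_subset h).trans_lt hsmall).not_ge (mk_univ (α := ι) ▸ hι)
  have : κ ≤ #(B i) := hS'κ ▸ (hS.subset hS'S).mk_le_of_inter_nonempty fun γ hγ =>
    not_disjoint_iff_nonempty_inter.1 fun hd => hi (mem_biUnion hγ hd)
  exact (hB i).not_ge this

theorem exists_isDeltaSystem_of_le_mk {κ : Cardinal.{u}} {ι : Type u} (hθ : θ.IsRegular)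
    (hcof : θ ≤ Order.cof O) (hIio : ∀ b : O, #(Iio b) < θ) (hκ : ℵ₀ ≤ κ) (hκθ : κ < θ)
    (hpow : ∀ c < θ, c ^< κ < θ) (B : ι → Set O) (hι : θ ≤ #ι) (hB : ∀ i, #(B i) < κ) :
    ∃ (t : Set ι) (r : Set O), θ ≤ #t ∧ IsDeltaSystem B t r := by
  obtain ⟨γ, hγ⟩ := exists_forall_le_mk_disjoint_Ico hθ hcof hIio hκθ hι hB
  obtain ⟨S, hSθ, hS⟩ : ∃ S : Set ι, θ ≤ #S ∧ S.PairwiseDisjoint fun i => B i \ Iio γ :=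
    exists_pairwiseDisjoint_of_forall_le_mk hθ hcof
      (fun i => (mk_le_mk_of_subset sdiff_subset).trans_lt ((hB i).trans hκθ))
      fun b => (hγ b).trans <| mk_le_mk_of_subset fun i hi x hx =>
        not_lt.1 fun hxb => disjoint_left.1 hi hx.1 ⟨not_lt.1 hx.2, hxb⟩
  have hheads : #{r : Set O // r ⊆ Iio γ ∧ #r < κ} < θ :=
    (mk_bounded_subset_lt_le _ κ).trans_lt (mul_lt_of_lt hθ.aleph0_le hκθ
      (hpow _ (max_lt (hIio γ) (hκ.trans_lt hκθ))))
  let head (i : S) : {r : Set O // r ⊆ Iio γ ∧ #r < κ} :=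
    ⟨B i ∩ Iio γ, inter_subset_right, (mk_le_mk_of_subset inter_subset_left).trans_lt (hB i)⟩
  obtain ⟨⟨r, _⟩, t, htS, htθ, ht⟩ :=
    infinite_pigeonhole_set head θ hSθ hθ.aleph0_le (by rwa [hθ.cof_ord])
  refine ⟨t, r, htθ, fun i hi j hj hij => ?_⟩
  exact inter_eq_of_inter_eq_of_disjoint_diff (congrArg Subtype.val (ht hi))
    (congrArg Subtype.val (ht hj)) (hS (htS hi) (htS hj) hij)

end LinearOrder

/-- The Δ-system lemma: if `κ` is infinite, `θ > κ` is regular, and `α^{<κ} < θ` for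
all `α < θ`, then any family of `≥ θ` many sets each of size `< κ` has a subfamily
of size `θ` forming a Δ-system. -/
theorem delta_system_lemma {α ι : Type u} (κ θ : Cardinal.{u})
    (hκ : ℵ₀ ≤ κ) (hθ : θ.IsRegular) (hκθ : κ < θ)
    (hpow : ∀ c : Cardinal.{u}, c < θ → (⨆ ρ : Set.Iio κ, c ^ (ρ : Cardinal.{u})) < θ)
    (A : ι → Set α) (hι : θ ≤ Cardinal.mk ι)
    (hA : ∀ i, Cardinal.mk (A i) < κ) :
    ∃ (t : Set ι) (r : Set α), Cardinal.mk t = θ ∧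
      ∀ i ∈ t, ∀ j ∈ t, i ≠ j → A i ∩ A j = r := by
  obtain ⟨I, hI⟩ := le_mk_iff_exists_set.1 hι
  set U := ⋃ i : I, A i
  obtain ⟨e⟩ : #U ≤ #θ.ord.ToType := by
    rw [mk_toType, card_ord]
    calc #U ≤ #I * ⨆ i : I, #(A i) := mk_iUnion_le _
      _ ≤ θ * θ := mul_le_mul' hI.le (ciSup_le' fun i => ((hA i).trans hκθ).le)
      _ = θ := mul_eq_self hθ.aleph0_le
  obtain ⟨t, r, htθ, ht⟩ := exists_isDeltaSystem_of_le_mk (O := θ.ord.ToType) hθ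
    (by rw [Ordinal.cof_toType, hθ.cof_ord]) (fun b => by simpa using mk_Iio_lt b) hκ hκθ hpow
    (fun i : I => e '' (Subtype.val ⁻¹' A i)) hI.ge fun i =>
      (mk_image_le.trans (mk_preimage_of_injective _ _ Subtype.val_injective)).trans_lt (hA i)
  obtain ⟨t', ht't, ht'θ⟩ := le_mk_iff_exists_subset.1 htθ
  have hAU : (fun i : I => Subtype.val '' (Subtype.val ⁻¹' A i : Set U)) = A ∘ Subtype.val :=
    funext fun i => by
      rw [Subtype.image_preimage_coe]
      exact inter_eq_right.2 (subset_iUnion (fun i : I => A i) i)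
  have hΔ := ((ht.mono ht't).of_image e.injective).image Subtype.val_injective
  rw [hAU] at hΔ
  exact ⟨_, _, (mk_image_eq Subtype.val_injective).trans ht'θ, hΔ.of_comp⟩
end

section
/- For any family (X_i)_{i ∈ I} of topological spaces, if for every finite subset J ⊆ I the finite product ∏_{i ∈ J} X_i satisfies the countable chain condition, then the full product ∏_{i ∈ I} X_i satisfies the countable chain condition. -/
open Set

/-- Δ-system lemma for families of finite sets of fixed cardinality. -/
lemma delta_system_fixed_card {α : Type*} [DecidableEq α] (n : ℕ) :
    ∀ (S : Set (Finset α)), (∀ s ∈ S, s.card = n) → ¬ S.Countable →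
    ∃ (R : Finset α) (T : Set (Finset α)), T ⊆ S ∧ ¬ T.Countable ∧
      T.Pairwise (fun s t => s ∩ t = R) := by
  induction n with
  | zero =>
    intro S hcard hS
    exact absurd ((Set.countable_singleton ∅).mono
      (fun s hs => by simpa using Finset.card_eq_zero.mp (hcard s hs))) hS
  | succ n ih =>
    intro S hcard hS
    by_cases hx : ∃ x : α, ¬ {s ∈ S | x ∈ s}.Countable
    · -- some element is in uncountably many sets
      obtain ⟨x, hx⟩ := hx
      set Sx := {s ∈ S | x ∈ s} with hSx
      set S' := (fun s : Finset α => s.erase x) '' Sx with hS'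
      have hS'unc : ¬ S'.Countable := by
        intro hc
        apply hx
        have hsub : Sx ⊆ (fun s : Finset α => insert x s) '' S' := by
          rintro s ⟨hsS, hxs⟩
          exact ⟨s.erase x, ⟨s, ⟨hsS, hxs⟩, rfl⟩, Finset.insert_erase hxs⟩
        exact (hc.image _).mono hsub
      have hS'card : ∀ s ∈ S', s.card = n := by
        rintro _ ⟨s, ⟨hsS, hxs⟩, rfl⟩
        rw [Finset.card_erase_of_mem hxs, hcard s hsS]
        rfl
      obtain ⟨R, T', hT'sub, hT'unc, hT'pair⟩ := ih S' hS'card hS'unc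
      refine ⟨insert x R, {s ∈ Sx | s.erase x ∈ T'}, fun s hs => hs.1.1, ?_, ?_⟩
      · intro hc
        apply hT'unc
        have : T' ⊆ (fun s : Finset α => s.erase x) '' {s ∈ Sx | s.erase x ∈ T'} := by
          intro t' ht'
          obtain ⟨s, hsSx, rfl⟩ := hT'sub ht'
          exact ⟨s, ⟨hsSx, ht'⟩, rfl⟩
        exact (hc.image _).mono this
      · rintro s ⟨⟨hsS, hxs⟩, hsT'⟩ t ⟨⟨htS, hxt⟩, htT'⟩ hst
        have hne : s.erase x ≠ t.erase x := by
          intro he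
          exact hst (by rw [← Finset.insert_erase hxs, he, Finset.insert_erase hxt])
        have := hT'pair hsT' htT' hne
        ext a
        simp only [Finset.mem_inter, Finset.mem_insert, ← this, Finset.mem_erase]
        constructor
        · rintro ⟨has, hat⟩
          by_cases hax : a = x
          · exact Or.inl hax
          · exact Or.inr ⟨⟨hax, has⟩, ⟨hax, hat⟩⟩
        · rintro (rfl | ⟨⟨-, has⟩, ⟨-, hat⟩⟩)
          · exact ⟨hxs, hxt⟩
          · exact ⟨has, hat⟩
    · -- every element is in only countably many sets
      push_neg at hx
      have hzorn : ∀ c ⊆ {T : Set (Finset α) | T ⊆ S ∧ T.Pairwise (fun s t => s ∩ t = ∅)},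
          IsChain (· ⊆ ·) c → ∃ ub ∈ {T : Set (Finset α) | T ⊆ S ∧
            T.Pairwise (fun s t => s ∩ t = ∅)}, ∀ T ∈ c, T ⊆ ub := by
        intro c hcsub hchain
        refine ⟨⋃₀ c, ⟨?_, ?_⟩, fun s hs => subset_sUnion_of_mem hs⟩
        · exact sUnion_subset fun T hT => (hcsub hT).1
        · rintro s ⟨T₁, hT₁, hsT₁⟩ t ⟨T₂, hT₂, htT₂⟩ hst
          rcases hchain.total hT₁ hT₂ with hsub | hsub
          · exact (hcsub hT₂).2 (hsub hsT₁) htT₂ hst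
          · exact (hcsub hT₁).2 hsT₁ (hsub htT₂) hst
      obtain ⟨m, hmax⟩ := zorn_subset
        {T : Set (Finset α) | T ⊆ S ∧ T.Pairwise (fun s t => s ∩ t = ∅)} hzorn
      have hmD := hmax.1
      refine ⟨∅, m, hmD.1, ?_, hmD.2⟩
      intro hmc
      have hE : (⋃ s ∈ m, (↑s : Set α)).Countable :=
        hmc.biUnion fun s _ => s.countable_toSet
      have hM : (⋃ a ∈ ⋃ s ∈ m, (↑s : Set α), {s ∈ S | a ∈ s}).Countable :=
        hE.biUnion fun a _ => hx a
      have : ¬ S ⊆ m ∪ ⋃ a ∈ ⋃ s ∈ m, (↑s : Set α), {s ∈ S | a ∈ s} := by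
        intro hsub
        exact hS ((hmc.union hM).mono hsub)
      obtain ⟨s, hsS, hs⟩ := not_subset.mp this
      rw [mem_union, not_or] at hs
      obtain ⟨hsm, hsM⟩ := hs
      have hdisj : ∀ t ∈ m, s ∩ t = ∅ := by
        intro t htm
        by_contra hne
        obtain ⟨a, ha⟩ := Finset.nonempty_iff_ne_empty.mpr hne
        rw [Finset.mem_inter] at ha
        exact hsM (mem_biUnion (mem_biUnion htm ha.2) ⟨hsS, ha.1⟩)
      have hins : insert s m ∈ {T : Set (Finset α) | T ⊆ S ∧
          T.Pairwise (fun s t => s ∩ t = ∅)} := by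
        refine ⟨insert_subset hsS hmD.1, hmD.2.insert fun t htm hst => ?_⟩
        exact ⟨hdisj t htm, by rw [Finset.inter_comm]; exact hdisj t htm⟩
      exact hsm (hmax.2 hins (subset_insert s m) (mem_insert s m))

/-- Δ-system lemma: an uncountable family of finite sets contains an uncountable
Δ-subsystem. -/
lemma delta_system {α : Type*} [DecidableEq α] (S : Set (Finset α)) (hS : ¬ S.Countable) :
    ∃ (R : Finset α) (T : Set (Finset α)), T ⊆ S ∧ ¬ T.Countable ∧
      T.Pairwise (fun s t => s ∩ t = R) := by
  have : ∃ n, ¬ {s ∈ S | s.card = n}.Countable := by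
    by_contra hc
    push_neg at hc
    apply hS
    have : S ⊆ ⋃ n, {s ∈ S | s.card = n} := fun s hs => mem_iUnion.mpr ⟨s.card, hs, rfl⟩
    exact (countable_iUnion hc).mono this
  obtain ⟨n, hn⟩ := this
  obtain ⟨R, T, hTsub, hTunc, hTpair⟩ :=
    delta_system_fixed_card n {s ∈ S | s.card = n} (fun s hs => hs.2) hn
  exact ⟨R, T, fun s hs => (hTsub hs).1, hTunc, hTpair⟩

/-- Indexed form of the Δ-system lemma. -/
lemma delta_system_indexed {β α : Type*} [DecidableEq α] (A : Set β) (hA : ¬ A.Countable)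
    (f : β → Finset α) :
    ∃ (R : Finset α) (B : Set β), B ⊆ A ∧ ¬ B.Countable ∧
      B.Pairwise (fun a b => f a ∩ f b = R) := by
  by_cases hfib : ∃ s, ¬ {a ∈ A | f a = s}.Countable
  · obtain ⟨s, hs⟩ := hfib
    refine ⟨s, {a ∈ A | f a = s}, fun a ha => ha.1, hs, ?_⟩
    rintro a ⟨-, rfl⟩ b ⟨-, hb⟩ -
    rw [hb, Finset.inter_self]
  · push_neg at hfib
    have himg : ¬ (f '' A).Countable := by
      intro hc
      apply hA
      have : A ⊆ ⋃ s ∈ f '' A, {a ∈ A | f a = s} :=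
        fun a ha => mem_biUnion (mem_image_of_mem f ha) ⟨ha, rfl⟩
      exact (hc.biUnion fun s _ => hfib s).mono this
    obtain ⟨R, T, hTsub, hTunc, hTpair⟩ := delta_system (f '' A) himg
    have hAne : A.Nonempty := Set.nonempty_iff_ne_empty.mpr
      (fun h => hA (h ▸ Set.countable_empty))
    haveI : Nonempty β := ⟨hAne.choose⟩
    have hsec : ∀ s ∈ T, ∃ a ∈ A, f a = s := fun s hs => hTsub hs
    choose! g hgA hgf using hsec
    refine ⟨R, g '' T, ?_, ?_, ?_⟩
    · rintro _ ⟨s, hs, rfl⟩; exact hgA s hs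
    · intro hc
      apply hTunc
      have : T ⊆ f '' (g '' T) := by
        intro s hs
        exact ⟨g s, mem_image_of_mem g hs, hgf s hs⟩
      exact ((hc.image f).mono this)
    · rintro _ ⟨s, hs, rfl⟩ _ ⟨t, ht, rfl⟩ hne
      rw [hgf s hs, hgf t ht]
      exact hTpair hs ht (fun h => hne (by rw [h]))

/-- A topological space satisfies the countable chain condition if every family of
pairwise disjoint nonempty open sets is countable. -/
def SpaceCCC (X : Type*) [TopologicalSpace X] : Prop :=
  ∀ 𝒜 : Set (Set X), (∀ U ∈ 𝒜, IsOpen U ∧ U.Nonempty) →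
    (𝒜.Pairwise fun U V => U ∩ V = ∅) → 𝒜.Countable

/-- If every finite subproduct of a family of topological spaces has the countable
chain condition, then so does the full product. -/
theorem product_ccc {ι : Type*} (X : ι → Type*) [∀ i, TopologicalSpace (X i)]
    (h : ∀ J : Finset ι, SpaceCCC (∀ j : J, X j)) :
    SpaceCCC (∀ i, X i) := by
  classical
  intro 𝒜 hopen hdisj
  by_contra hA
  -- the product is nonempty since 𝒜 contains a nonempty set
  have h𝒜ne : 𝒜.Nonempty := Set.nonempty_iff_ne_empty.mpr
    (fun hh => hA (hh ▸ Set.countable_empty))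
  haveI hne : Nonempty (∀ i, X i) := ⟨((hopen _ h𝒜ne.choose_spec).2).choose⟩
  have key : ∀ U ∈ 𝒜, ∃ (p : ∀ i, X i) (J : Finset ι) (u : ∀ i, Set (X i)),
      (∀ i ∈ J, IsOpen (u i) ∧ p i ∈ u i) ∧ (J : Set ι).pi u ⊆ U := by
    intro U hU
    obtain ⟨p, hp⟩ := (hopen U hU).2
    obtain ⟨J, u, h1, h2⟩ := isOpen_pi_iff.mp (hopen U hU).1 p hp
    exact ⟨p, J, u, h1, h2⟩
  choose! p J u h1 h2 using key
  obtain ⟨R, B, hB𝒜, hBunc, hpair⟩ := delta_system_indexed 𝒜 hA J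
  have hRsub : ∀ U ∈ B, R ⊆ J U := by
    intro U hU
    have hBU : (B \ {U}).Nonempty := by
      rw [Set.nonempty_iff_ne_empty]
      intro hE
      rw [Set.diff_eq_empty] at hE
      exact hBunc ((Set.countable_singleton U).mono hE)
    obtain ⟨V, hVB, hVU⟩ := hBU
    rw [← hpair hU hVB (Ne.symm hVU)]
    exact Finset.inter_subset_left
  set W : Set (∀ i, X i) → Set (∀ j : R, X j) :=
    fun U => ⋂ j : {x // x ∈ R}, (fun g : ∀ j : R, X j => g j) ⁻¹' (u U j) with hW
  have hWopen : ∀ U ∈ B, IsOpen (W U) := by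
    intro U hU
    exact isOpen_iInter_of_finite fun j =>
      ((h1 U (hB𝒜 hU) j (hRsub U hU j.2)).1).preimage (continuous_apply j)
  have hWne : ∀ U ∈ B, (W U).Nonempty := by
    intro U hU
    exact ⟨fun j => p U j, Set.mem_iInter.mpr fun j => (h1 U (hB𝒜 hU) j (hRsub U hU j.2)).2⟩
  have hWdisj : ∀ U ∈ B, ∀ V ∈ B, U ≠ V → W U ∩ W V = ∅ := by
    intro U hU V hV hUV
    rw [Set.eq_empty_iff_forall_notMem]
    rintro g ⟨hgU, hgV⟩
    set q : ∀ i, X i := fun i => if hi : i ∈ R then g ⟨i, hi⟩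
      else if i ∈ J U then p U i else p V i with hq
    have hqU : q ∈ (↑(J U) : Set ι).pi (u U) := by
      intro i hiJ
      rw [Finset.mem_coe] at hiJ
      simp only [hq]
      by_cases hi : i ∈ R
      · simp only [dif_pos hi]
        exact Set.mem_iInter.mp hgU ⟨i, hi⟩
      · simp only [dif_neg hi, if_pos hiJ]
        exact (h1 U (hB𝒜 hU) i hiJ).2
    have hqV : q ∈ (↑(J V) : Set ι).pi (u V) := by
      intro i hiJ
      rw [Finset.mem_coe] at hiJ
      simp only [hq]
      by_cases hi : i ∈ R
      · simp only [dif_pos hi]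
        exact Set.mem_iInter.mp hgV ⟨i, hi⟩
      · have hiJU : i ∉ J U := fun hiU => hi (by
          rw [← hpair hU hV hUV]
          exact Finset.mem_inter.mpr ⟨hiU, hiJ⟩)
        simp only [dif_neg hi, if_neg hiJU]
        exact (h1 V (hB𝒜 hV) i hiJ).2
    have hqUV : q ∈ U ∩ V := ⟨h2 U (hB𝒜 hU) hqU, h2 V (hB𝒜 hV) hqV⟩
    rw [hdisj (hB𝒜 hU) (hB𝒜 hV) hUV] at hqUV
    exact hqUV
  have hWinj : Set.InjOn W B := by
    intro U hU V hV hWe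
    by_contra hUV
    have hWW := hWdisj U hU V hV hUV
    rw [hWe, Set.inter_self] at hWW
    exact (hWne V hV).ne_empty hWW
  apply hBunc
  apply countable_of_injective_of_countable_image hWinj
  refine h R (W '' B) ?_ ?_
  · rintro _ ⟨U, hU, rfl⟩
    exact ⟨hWopen U hU, hWne U hU⟩
  · rintro _ ⟨U, hU, rfl⟩ _ ⟨V, hV, rfl⟩ hne'
    exact hWdisj U hU V hV (fun hh => hne' (by rw [hh]))
end

section
/- The regular open algebra of the product space 2^(ℵ₂ × ℕ) (with the product topology, 2 discrete) satisfies the countable chain condition: every antichain in it is countable. -/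
open Cardinal

/-- A set is regular open if it equals the interior of its closure. -/
def IsRegularOpen {X : Type*} [TopologicalSpace X] (U : Set X) : Prop :=
  interior (closure U) = U

/-- The underlying type of `ℵ₂`. -/
noncomputable abbrev Aleph2 : Type 1 := (aleph 2).ord.ToType

/-- The Cohen forcing space `2^(ℵ₂ × ℕ)` with the product topology (`2` discrete). -/
abbrev CohenSpace : Type 1 := Aleph2 × ℕ → Bool

/-!
With coordinatewise `xor`, `2^(ℵ₂ × ℕ)` is a compact topological group. Its Haar measure is
finite and positive on nonempty open sets, and a finite measure admits only countably many
pairwise disjoint sets of positive measure.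
-/

open MeasureTheory Function

theorem IsRegularOpen.isOpen {X : Type*} [TopologicalSpace X] {U : Set X}
    (hU : IsRegularOpen U) : IsOpen U :=
  hU ▸ isOpen_interior

theorem Pairwise.countable_range_of_isOpen_of_isOpenPosMeasure {X ι : Type*}
    [TopologicalSpace X] [MeasurableSpace X] [OpensMeasurableSpace X]
    (μ : Measure X) [IsFiniteMeasure μ] [μ.IsOpenPosMeasure]
    {a : ι → Set X} (hd : Pairwise (Disjoint on a)) (ha : ∀ i, IsOpen (a i)) :
    (Set.range a).Countable := by
  have hpos : {i | 0 < μ (a i)}.Countable :=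
    Measure.countable_meas_pos_of_disjoint_iUnion (fun i => (ha i).measurableSet) hd
  refine ((hpos.image a).insert ∅).mono ?_
  rintro _ ⟨i, rfl⟩
  rcases (a i).eq_empty_or_nonempty with hempty | hne
  · exact .inl hempty
  · exact .inr ⟨i, (ha i).measure_pos μ hne, rfl⟩

theorem Pairwise.countable_range_of_isOpen_of_isTopologicalAddGroup {G ι : Type*}
    [TopologicalSpace G] [AddGroup G] [IsTopologicalAddGroup G] [CompactSpace G]
    {a : ι → Set G} (hd : Pairwise (Disjoint on a)) (ha : ∀ i, IsOpen (a i)) :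
    (Set.range a).Countable := by
  borelize G
  exact hd.countable_range_of_isOpen_of_isOpenPosMeasure Measure.addHaar ha

/-- The regular open algebra of `2^(ℵ₂ × ℕ)` has the countable chain condition:
every antichain (indexed family of regular opens with pairwise intersection empty,
intersection being the meet of the algebra) has countable image. -/
theorem cohen_algebra_ccc {ι : Type*} (a : ι → Set CohenSpace)
    (ha : ∀ i, IsRegularOpen (a i))
    (hanti : ∀ i j, i ≠ j → a i ∩ a j = ∅) :
    (Set.range a).Countable :=
  Pairwise.countable_range_of_isOpen_of_isTopologicalAddGroup
    (fun i j hij => Set.disjoint_iff_inter_eq_empty.2 (hanti i j hij)) fun i => (ha i).isOpen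
end

section
/- The maximum principle: for every 𝔹-valued predicate ϕ : bSet 𝔹 → 𝔹 which is extensional (i.e., for all x y, (x =ᴮ y) ⊓ ϕ x ≤ ϕ y), there exists u : bSet 𝔹 such that ⨆ x, ϕ x = ϕ u. -/
universe u

/-- Boolean-valued sets over a complete Boolean algebra `𝔹`. -/
inductive bSet (𝔹 : Type u) [CompleteBooleanAlgebra 𝔹] : Type (u + 1)
  | mk (α : Type u) (A : α → bSet 𝔹) (B : α → 𝔹) : bSet 𝔹

namespace bSet

variable {𝔹 : Type u} [CompleteBooleanAlgebra 𝔹]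

/-- Boolean-valued equality:
`⟨α,A,B⟩ =ᴮ ⟨α\u0027,A\u0027,B\u0027⟩ := (⨅ a, B a ⟹ ⨆ a\u0027, B\u0027 a\u0027 ⊓ (A a =ᴮ A\u0027 a\u0027)) ⊓ (symmetrically)`. -/
def bvEq : bSet 𝔹 → bSet 𝔹 → 𝔹
  | ⟨_, A, B⟩, ⟨_, A', B'⟩ =>
      (⨅ a, B a ⇨ ⨆ a', B' a' ⊓ bvEq (A a) (A' a')) ⊓
      (⨅ a', B' a' ⇨ ⨆ a, B a ⊓ bvEq (A a) (A' a'))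

/-- Boolean-valued membership: `x ∈ᴮ ⟨α,A,B⟩ := ⨆ a, B a ⊓ (x =ᴮ A a)`. -/
def bvMem (x : bSet 𝔹) : bSet 𝔹 → 𝔹
  | ⟨_, A, B⟩ => ⨆ a, B a ⊓ bvEq x (A a)

/-- Boolean-valued subset. -/
def bvSubset : bSet 𝔹 → bSet 𝔹 → 𝔹
  | ⟨_, A, B⟩, y => ⨅ a, B a ⇨ bvMem (A a) y

/-- Boolean-valued biimplication. -/
def biimp (a b : 𝔹) : 𝔹 := (a ⇨ b) ⊓ (b ⇨ a)

def type : bSet 𝔹 → Type u | ⟨α, _, _⟩ => α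
def func : ∀ x : bSet 𝔹, x.type → bSet 𝔹 | ⟨_, A, _⟩ => A
def bval : ∀ x : bSet 𝔹, x.type → 𝔹 | ⟨_, _, B⟩ => B

lemma bvEq_def (x y : bSet 𝔹) : bvEq x y =
    (⨅ a, x.bval a ⇨ ⨆ a', y.bval a' ⊓ bvEq (x.func a) (y.func a')) ⊓
    (⨅ a', y.bval a' ⇨ ⨆ a, x.bval a ⊓ bvEq (x.func a) (y.func a')) := by
  cases x; cases y; rfl

lemma bvEq_refl (x : bSet 𝔹) : bvEq x x = ⊤ := by
  induction x with
  | mk α A B ih =>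
    simp only [bvEq]
    rw [eq_top_iff]
    refine le_inf (le_iInf fun a => ?_) (le_iInf fun a => ?_) <;>
      · rw [le_himp_iff]
        exact le_iSup_of_le a (by simp [ih a])

lemma bvEq_symm (x y : bSet 𝔹) : bvEq x y = bvEq y x := by
  induction x generalizing y with
  | mk α A B ih =>
    cases y with
    | mk α' A' B' =>
      simp only [bvEq]
      rw [inf_comm]
      congr 1
      · exact iInf_congr fun a' => by rw [iSup_congr fun a => by rw [ih a (A' a')]]
      · exact iInf_congr fun a => by rw [iSup_congr fun a' => by rw [ih a (A' a')]]

def mix {ι : Type u} (a : ι → 𝔹) (τ : ι → bSet 𝔹) : bSet 𝔹 :=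
  ⟨Σ i, (τ i).type, fun p => (τ p.1).func p.2, fun p => a p.1 ⊓ (τ p.1).bval p.2⟩

lemma mix_le {ι : Type u} (a : ι → 𝔹) (τ : ι → bSet 𝔹)
    (hac : ∀ i j, i ≠ j → a i ⊓ a j = ⊥) (i : ι) :
    a i ≤ bvEq (mix a τ) (τ i) := by
  rw [bvEq_def]
  refine le_inf (le_iInf fun p => ?_) (le_iInf fun y => ?_)
  · rw [le_himp_iff]
    rcases eq_or_ne p.1 i with h | h
    · obtain ⟨j, x⟩ := p
      subst h
      refine le_iSup_of_le x ?_
      show a j ⊓ _ ≤ (τ j).bval x ⊓ bvEq ((mix a τ).func ⟨j, x⟩) ((τ j).func x)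
      have : bvEq ((mix a τ).func ⟨j, x⟩) ((τ j).func x) = ⊤ := bvEq_refl _
      rw [this, inf_top_eq]
      exact le_trans inf_le_right inf_le_right
    · have : a i ⊓ (mix a τ).bval p ≤ a i ⊓ a p.1 := by
        exact inf_le_inf_left _ (inf_le_left)
      calc a i ⊓ (mix a τ).bval p ≤ a i ⊓ a p.1 := this
        _ = ⊥ := hac i p.1 (Ne.symm h)
        _ ≤ _ := bot_le
  · rw [le_himp_iff]
    refine le_iSup_of_le ⟨i, y⟩ ?_
    have : bvEq ((mix a τ).func ⟨i, y⟩) ((τ i).func y) = ⊤ := bvEq_refl _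
    exact le_inf le_rfl (this ▸ le_top)

end bSet


open bSet in
/-- The maximum principle: every extensional `𝔹`-valued predicate attains its
supremum at some `𝔹`-valued set. -/
theorem maximum_principle {𝔹 : Type u} [CompleteBooleanAlgebra 𝔹]
    (ϕ : bSet 𝔹 → 𝔹) (h_congr : ∀ x y : bSet 𝔹, bvEq x y ⊓ ϕ x ≤ ϕ y) :
    ∃ u : bSet 𝔹, (⨆ x : bSet 𝔹, ϕ x) = ϕ u := by
  classical
  set D : Set 𝔹 := {b | ∃ u, b ≤ ϕ u} with hD
  set P : Set (Set 𝔹) :=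
    {A | A ⊆ D ∧ ∀ x ∈ A, ∀ y ∈ A, x ≠ y → x ⊓ y = ⊥} with hP
  have hchains : ∀ c ⊆ P, IsChain (· ⊆ ·) c → ∃ ub ∈ P, ∀ s ∈ c, s ⊆ ub := by
    intro c hcP hchain
    refine ⟨⋃₀ c, ⟨?_, ?_⟩, fun s hs => Set.subset_sUnion_of_mem hs⟩
    · rintro b ⟨s, hs, hbs⟩
      exact (hcP hs).1 hbs
    · rintro x ⟨s, hs, hxs⟩ y ⟨t, ht, hyt⟩ hxy
      rcases hchain.total hs ht with h | h
      · exact (hcP ht).2 x (h hxs) y hyt hxy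
      · exact (hcP hs).2 x hxs y (h hyt) hxy
  obtain ⟨A, hmax⟩ := zorn_subset P hchains
  · have hsub : A ⊆ D := hmax.1.1
    have hdisj := hmax.1.2
    have hch : ∀ b : A, ∃ u, (b : 𝔹) ≤ ϕ u := fun b => hsub b.2
    choose τ hτ using hch
    set u : bSet 𝔹 := mix (fun b : A => (b : 𝔹)) τ with hu
    have hac : ∀ i j : A, i ≠ j → (i : 𝔹) ⊓ (j : 𝔹) = ⊥ := by
      intro i j hij
      exact hdisj i.1 i.2 j.1 j.2 (fun h => hij (Subtype.ext h))
    have h1 : ∀ b : A, (b : 𝔹) ≤ ϕ u := by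
      intro b
      have := le_inf (mix_le (fun b : A => (b : 𝔹)) τ hac b) (hτ b)
      refine this.trans ?_
      rw [bvEq_symm]
      exact h_congr (τ b) u
    have h2 : ∀ x, ϕ x ≤ sSup A := by
      intro x
      set b : 𝔹 := ϕ x ⊓ (sSup A)ᶜ with hb
      have hbP : insert b A ∈ P := by
        constructor
        · rintro y (rfl | hy)
          · exact ⟨x, inf_le_left⟩
          · exact hsub hy
        · rintro y (rfl | hy) z (rfl | hz) hyz
          · exact absurd rfl hyz
          · have h : b ⊓ z ≤ (sSup A)ᶜ ⊓ sSup A :=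
              inf_le_inf inf_le_right (le_sSup hz)
            rw [compl_inf_self] at h
            exact le_bot_iff.mp h
          · have h : y ⊓ b ≤ sSup A ⊓ (sSup A)ᶜ :=
              inf_le_inf (le_sSup hy) inf_le_right
            rw [inf_compl_self] at h
            exact le_bot_iff.mp h
          · exact hdisj y hy z hz hyz
      have hbA : b ∈ A := hmax.2 hbP (Set.subset_insert b A) (Set.mem_insert b A)
      have hbot : b = ⊥ := le_bot_iff.mp <| by
        calc b ≤ sSup A ⊓ (sSup A)ᶜ := le_inf (le_sSup hbA) inf_le_right
          _ = ⊥ := inf_compl_self _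
      rw [hb, ← sdiff_eq] at hbot
      exact sdiff_eq_bot_iff.mp hbot
    refine ⟨u, le_antisymm ?_ (le_iSup ϕ u)⟩
    refine iSup_le fun x => (h2 x).trans (sSup_le fun b hb => h1 ⟨b, hb⟩)
end
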